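/- For every real ρ ≥ 1 and all A ∈ M(p,p';F), B ∈ M(q,q';F), the ρ-norm is submultiplicative with respect to ⊙: ‖A⊙B‖_ρ ≤ ‖A‖_ρ·‖B‖_ρ. -/

import Mathlib

open scoped BigOperators ENNReal

noncomputable section

/-- The degree `|α|` of a multi-index `α ∈ ℕ^n`. -/
def mdeg {n : ℕ} (α : Fin n → ℕ) : ℕ := ∑ i, α i

/-- The factorial `α! = α₁! ⋯ αₙ!` of a multi-index. -/
def mfact {n : ℕ} (α : Fin n → ℕ) : ℕ := ∏ i, (α i).factorial

/-- The multi-indices in `ℕ^n` of degree `p`. -/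
abbrev MIdx (n p : ℕ) := {α : Fin n → ℕ // mdeg α = p}

instance (n p : ℕ) : Fintype (MIdx n p) :=
  Fintype.subtype (Finset.Nat.antidiagonalTuple n p) (fun α => by
    simp [Finset.Nat.mem_antidiagonalTuple, mdeg])

/-- The space `M(p,p';F)` of matrices with rows indexed by degree-`p` multi-indices in `ℕ^n`
and columns indexed by degree-`p'` multi-indices in `ℕ^n'`. -/
abbrev MMat (n n' p p' : ℕ) (F : Type*) := MIdx n p → MIdx n' p' → F

lemma mdeg_sub {n p q : ℕ} (α : MIdx n (p + q)) (β : MIdx n p) (h : ∀ i, β.1 i ≤ α.1 i) :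
    mdeg (α.1 - β.1) = q := by
  have h1 : mdeg (α.1 - β.1) + mdeg β.1 = mdeg α.1 := by
    simp only [mdeg, ← Finset.sum_add_distrib]
    exact Finset.sum_congr rfl fun i _ => Nat.sub_add_cancel (h i)
  have h2 := α.2
  have h3 := β.2
  omega

/-- The product `⊙` of `A ∈ M(p,p';F)` and `B ∈ M(q,q';F)`:
`(A⊙B)_{α,α'} = Σ_{β≤α, β'≤α', |β|=p, |β'|=p'} (α!/(β!(α−β)!)) A_{β,β'} B_{α−β,α'−β'}`. -/
def oprod {n n' p p' q q' : ℕ} {F : Type*} [RCLike F]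
    (A : MMat n n' p p' F) (B : MMat n n' q q' F) : MMat n n' (p + q) (p' + q') F :=
  fun α α' =>
    ∑ β : MIdx n p, ∑ β' : MIdx n' p',
      if h : (∀ i, β.1 i ≤ α.1 i) ∧ (∀ j, β'.1 j ≤ α'.1 j) then
        ((mfact α.1 : F) / ((mfact β.1 : F) * (mfact (α.1 - β.1) : F))) * A β β' *
          B ⟨α.1 - β.1, mdeg_sub α β h.1⟩ ⟨α'.1 - β'.1, mdeg_sub α' β' h.2⟩
      else 0

/-- Change the degree parameter of a multi-index along an equality of natural numbers. -/
def recast {n a b : ℕ} (h : a = b) (α : MIdx n a) : MIdx n b := ⟨α.1, h ▸ α.2⟩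

/-- The ordinary matrix product. -/
def mmul {n n' p q q' : ℕ} {F : Type*} [RCLike F]
    (A : MMat n n p q F) (B : MMat n n' q q' F) : MMat n n' p q' F :=
  fun α α' => ∑ β : MIdx n q, A α β * B β α'

/-- The `m`-th `⊙`-power of a row `h ∈ M(0,1;F)`. -/
def opowRow {n : ℕ} {F : Type*} [RCLike F] (h : MMat n n 0 1 F) : (m : ℕ) → MMat n n 0 m F
  | 0 => fun _ _ => 1
  | m + 1 => fun z α => oprod h (opowRow h m) z (recast (Nat.add_comm m 1) α)

/-- The `m`-th `⊙`-power of a column `v ∈ M(1,0;F)`. -/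
def opowCol {n : ℕ} {F : Type*} [RCLike F] (v : MMat n n 1 0 F) : (m : ℕ) → MMat n n m 0 F
  | 0 => fun _ _ => 1
  | m + 1 => fun α z => oprod v (opowCol v m) (recast (Nat.add_comm m 1) α) z

/-- The `⊙`-product `h¹ ⊙ h² ⊙ ⋯ ⊙ hᵐ` of a family of rows `hⁱ ∈ M(0,1;F)`. -/
def oprodRowFamily {n : ℕ} {F : Type*} [RCLike F] :
    (m : ℕ) → (Fin m → MMat n n 0 1 F) → MMat n n 0 m F
  | 0, _ => fun _ _ => 1
  | m + 1, hs => fun z α =>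
      oprod (hs 0) (oprodRowFamily m fun i => hs i.succ) z (recast (Nat.add_comm m 1) α)

/-- The row vector `(h₁,…,hₙ) ∈ M(0,1;F)` determined by `h : Fin n → F`; its entry at the
degree-one column index `α'` is `h^{α'}`. -/
def rowOf {n : ℕ} {F : Type*} [RCLike F] (h : Fin n → F) : MMat n n 0 1 F :=
  fun _ α' => ∏ i, h i ^ α'.1 i

/-- The column vector `(v₁,…,vₙ) ∈ M(1,0;F)` determined by `v : Fin n → F`. -/
def colOf {n : ℕ} {F : Type*} [RCLike F] (v : Fin n → F) : MMat n n 1 0 F :=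
  fun α _ => ∏ i, v i ^ α.1 i

/-- The unit matrix `E_k ∈ M_{n,n}(k,k;F)`. -/
def unitMat (n k : ℕ) (F : Type*) [RCLike F] : MMat n n k k F :=
  fun α β => if α = β then 1 else 0

/-- The `ρ`-norm `‖A‖_ρ = (Σ_{α,α'} |A_{α,α'}|^ρ/(α!(p!p'!)^{ρ−1}))^{1/ρ}` on `M(p,p';F)`. -/
def rnorm {n n' p p' : ℕ} {F : Type*} [RCLike F] (ρ : ℝ) (A : MMat n n' p p' F) : ℝ :=
  (∑ α : MIdx n p, ∑ α' : MIdx n' p',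
      ‖A α α'‖ ^ ρ /
        ((mfact α.1 : ℝ) * ((p.factorial * p'.factorial : ℕ) : ℝ) ^ (ρ - 1))) ^ (1 / ρ)

/-- The `∞`-norm `‖A‖_∞ = sup_{α,α'} |A_{α,α'}| / (p!p'!)` on `M(p,p';F)`. -/
def rnormInf {n n' p p' : ℕ} {F : Type*} [RCLike F] (A : MMat n n' p p' F) : ℝ :=
  (⨆ x : MIdx n p × MIdx n' p', ‖A x.1 x.2‖) / ((p.factorial * p'.factorial : ℕ) : ℝ)

/-- The `σ`-norm of a vector in `F^n`, for a real exponent `σ`. -/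
def vnorm {n : ℕ} {F : Type*} [RCLike F] (σ : ℝ) (h : Fin n → F) : ℝ :=
  (∑ i, ‖h i‖ ^ σ) ^ (1 / σ)

/-- The `σ`-norm of a vector in `F^n`, for an extended real exponent `σ`
(`= max_i |h_i|` when `σ = ∞`). -/
def vnormE {n : ℕ} {F : Type*} [RCLike F] (σ : ℝ≥0∞) (h : Fin n → F) : ℝ :=
  if σ = ∞ then ⨆ i, ‖h i‖ else (∑ i, ‖h i‖ ^ σ.toReal) ^ (1 / σ.toReal)

/-- Absolute convergence of the power series `Σ_m x^{(m)}/m!·A(m)` at the point `h ∈ F^n`: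
for every column index `α'` of degree `q'`, the family `|h^α/α! · A(|α|)_{α,α'}|`, indexed by
all multi-indices `α ∈ ℕ^n`, is summable. -/
def AbsConvAt {n n' q' : ℕ} {F : Type*} [RCLike F]
    (A : (m : ℕ) → MMat n n' m q' F) (h : Fin n → F) : Prop :=
  ∀ α' : MIdx n' q', Summable fun α : Fin n → ℕ =>
    ‖(∏ i, h i ^ α i) / (mfact α : F) * A (mdeg α) ⟨α, rfl⟩ α'‖

/-- `r = limsup_m ‖A(m)‖_ρ^{1/m}`, the reciprocal of the radius of convergence,
computed in `ℝ≥0∞`. -/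
def convRadiusInv {n n' q' : ℕ} {F : Type*} [RCLike F] (ρ : ℝ)
    (A : (m : ℕ) → MMat n n' m q' F) : ℝ≥0∞ :=
  Filter.atTop.limsup fun m : ℕ => ENNReal.ofReal (rnorm ρ (A m)) ^ (1 / (m : ℝ))

/-- `r = limsup_m ‖A(m)‖_∞^{1/m}` computed in `ℝ≥0∞`. -/
def convRadiusInvInf {n n' q' : ℕ} {F : Type*} [RCLike F]
    (A : (m : ℕ) → MMat n n' m q' F) : ℝ≥0∞ :=
  Filter.atTop.limsup fun m : ℕ => ENNReal.ofReal (rnormInf (A m)) ^ (1 / (m : ℝ))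

/-!
Expanding the product, `(A⊙B)_{α,α'}` is a sum of terms `C(α,β) A_{β,β'} B_{α-β,α'-β'}` over
`β ≤ α`, `β' ≤ α'`, with `C(α,β) = ∏ᵢ (αᵢ choose βᵢ)`. By the weighted Hölder inequality with
weights `C(α,β)`, the `ρ`-th power of such an entry is at most `K^{ρ-1} Σ C(α,β) |A|^ρ |B|^ρ`,
where `K = (p+q choose p)(p'+q' choose p')` bounds the total weight by Vandermonde's identity.
Since `(p+q)!(p'+q')! = K p!p'! q!q'!` and `α! = C(α,β) β!(α-β)!`, the normalisation of the
`ρ`-norm absorbs both `K^{ρ-1}` and `C(α,β)`; summing over `(α,α')` and substituting `γ = α - β`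
then factors the bound as `‖A‖_ρ^ρ ‖B‖_ρ^ρ`.
-/
open Finset

theorem rpow_sum_mul_le_of_sum_le {ι : Type*} (s : Finset ι) {ρ K : ℝ} (hρ : 1 ≤ ρ)
    {c t : ι → ℝ} (hc : ∀ i, 0 ≤ c i) (ht : ∀ i, 0 ≤ t i) (hK : ∑ i ∈ s, c i ≤ K) :
    (∑ i ∈ s, c i * t i) ^ ρ ≤ K ^ (ρ - 1) * ∑ i ∈ s, c i * t i ^ ρ := by
  have hρ0 : 0 < ρ := zero_lt_one.trans_le hρ
  have hc_sum : 0 ≤ ∑ i ∈ s, c i := sum_nonneg fun i _ => hc i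
  have hct_sum : 0 ≤ ∑ i ∈ s, c i * t i ^ ρ :=
    sum_nonneg fun i _ => mul_nonneg (hc i) (Real.rpow_nonneg (ht i) _)
  calc (∑ i ∈ s, c i * t i) ^ ρ
      ≤ ((∑ i ∈ s, c i) ^ (1 - ρ⁻¹) * (∑ i ∈ s, c i * t i ^ ρ) ^ ρ⁻¹) ^ ρ :=
        Real.rpow_le_rpow (sum_nonneg fun i _ => mul_nonneg (hc i) (ht i))
          (Real.inner_le_weight_mul_Lp_of_nonneg s hρ c t hc ht) hρ0.le
    _ = (∑ i ∈ s, c i) ^ (ρ - 1) * ∑ i ∈ s, c i * t i ^ ρ := by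
        rw [Real.mul_rpow (by positivity) (by positivity), ← Real.rpow_mul hc_sum,
          ← Real.rpow_mul hct_sum, sub_mul, inv_mul_cancel₀ hρ0.ne', one_mul, Real.rpow_one]
    _ ≤ K ^ (ρ - 1) * ∑ i ∈ s, c i * t i ^ ρ := by gcongr

theorem Finset.Nat.sum_antidiagonalTuple_succ {M : Type*} [AddCommMonoid M] (k p : ℕ)
    (f : (Fin (k + 1) → ℕ) → M) :
    ∑ β ∈ antidiagonalTuple (k + 1) p, f β =
      ∑ ab ∈ antidiagonal p, ∑ t ∈ antidiagonalTuple k ab.2, f (Fin.cons ab.1 t) := by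
  show (Multiset.map f (Multiset.Nat.antidiagonalTuple (k + 1) p)).sum =
    (Multiset.map _ (Multiset.Nat.antidiagonal p)).sum
  simp only [Multiset.Nat.antidiagonalTuple, Multiset.Nat.antidiagonal, Multiset.map_coe,
    Multiset.sum_coe, List.Nat.antidiagonalTuple, List.flatMap, List.map_flatten, List.sum_flatten,
    List.map_map]
  congr 1
  refine List.map_congr_left fun ab _ => ?_
  simp only [Function.comp, Finset.sum, antidiagonalTuple, Multiset.Nat.antidiagonalTuple,
    Multiset.map_coe, Multiset.sum_coe, List.map_map]
  rfl

theorem Finset.Nat.sum_antidiagonalTuple_prod_choose (k p : ℕ) (α : Fin k → ℕ) :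
    ∑ β ∈ antidiagonalTuple k p, ∏ i, (α i).choose (β i) = (∑ i, α i).choose p := by
  induction k generalizing p with
  | zero => cases p <;> simp
  | succ k ih =>
    rw [sum_antidiagonalTuple_succ, Fin.sum_univ_succ, Nat.add_choose_eq]
    refine sum_congr rfl fun ab _ => ?_
    simp only [Fin.prod_univ_succ, Fin.cons_zero, Fin.cons_succ, ← mul_sum]
    rw [ih]

section MultiIndex

variable {n : ℕ}

instance : DecidableLE (Fin n → ℕ) := fun _ _ => Fintype.decidableForallFintype

def mchoose (α β : Fin n → ℕ) : ℕ := ∏ i, (α i).choose (β i)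

theorem mdeg_add (α β : Fin n → ℕ) : mdeg (α + β) = mdeg α + mdeg β :=
  sum_add_distrib

theorem sum_mchoose (α : Fin n → ℕ) (p : ℕ) :
    ∑ β : MIdx n p, mchoose α β.1 = (mdeg α).choose p := by
  rw [← Finset.sum_subtype (Finset.Nat.antidiagonalTuple n p)
    (fun β => by simp [Finset.Nat.mem_antidiagonalTuple, mdeg]) (mchoose α)]
  exact Finset.Nat.sum_antidiagonalTuple_prod_choose n p α

theorem mfact_pos (α : Fin n → ℕ) : 0 < mfact α :=
  prod_pos fun _ _ => Nat.factorial_pos _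

theorem mchoose_pos {α β : Fin n → ℕ} (h : β ≤ α) : 0 < mchoose α β :=
  prod_pos fun i _ => Nat.choose_pos (h i)

theorem mchoose_mul_mfact_mul_mfact {α β : Fin n → ℕ} (h : β ≤ α) :
    mchoose α β * (mfact β * mfact (α - β)) = mfact α := by
  simp only [mchoose, mfact, ← prod_mul_distrib]
  refine prod_congr rfl fun i _ => ?_
  rw [Pi.sub_apply, ← mul_assoc, Nat.choose_mul_factorial_mul_factorial (h i)]

theorem sum_ite_le_sub {M : Type*} [AddCommMonoid M] {p q : ℕ} (β : MIdx n p)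
    (g : (Fin n → ℕ) → M) :
    ∑ α : MIdx n (p + q), (if β.1 ≤ α.1 then g (α.1 - β.1) else 0) = ∑ γ : MIdx n q, g γ.1 := by
  rw [← sum_filter]
  symm
  refine sum_bij (fun γ _ => ⟨β.1 + γ.1, by rw [mdeg_add, β.2, γ.2]⟩) ?_ ?_ ?_ ?_
  · simp
  · intro γ₁ _ γ₂ _ h
    exact Subtype.ext (add_left_cancel (congrArg Subtype.val h))
  · intro α hα
    rw [mem_filter] at hα
    exact ⟨⟨α.1 - β.1, mdeg_sub α β hα.2⟩, mem_univ _,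
      Subtype.ext (add_tsub_cancel_of_le hα.2)⟩
  · simp

end MultiIndex

section MMat

variable {n n' p p' q q' : ℕ} {F : Type*} [RCLike F]

/-- Lets `B` be evaluated at `α - β` without a proof that this multi-index has degree `q`. -/
def extendByZero {F : Type*} [Zero F] (B : MMat n n' q q' F) (γ : Fin n → ℕ) (γ' : Fin n' → ℕ) :
    F :=
  if h : mdeg γ = q ∧ mdeg γ' = q' then B ⟨γ, h.1⟩ ⟨γ', h.2⟩ else 0

@[simp]
theorem extendByZero_val {F : Type*} [Zero F] (B : MMat n n' q q' F) (γ : MIdx n q)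
    (γ' : MIdx n' q') : extendByZero B γ.1 γ'.1 = B γ γ' :=
  dif_pos ⟨γ.2, γ'.2⟩

def rnormSummand (ρ : ℝ) (A : MMat n n' p p' F) (β : Fin n → ℕ) (β' : Fin n' → ℕ) : ℝ :=
  ‖extendByZero A β β'‖ ^ ρ / ((mfact β : ℝ) * ((p.factorial * p'.factorial : ℕ) : ℝ) ^ (ρ - 1))

theorem rnorm_eq_sum_rnormSummand (ρ : ℝ) (A : MMat n n' p p' F) :
    rnorm ρ A = (∑ β : MIdx n p, ∑ β' : MIdx n' p', rnormSummand ρ A β.1 β'.1) ^ (1 / ρ) := by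
  simp only [rnorm, rnormSummand, extendByZero_val]

theorem sum_rnormSummand_nonneg (ρ : ℝ) (A : MMat n n' p p' F) :
    0 ≤ ∑ β : MIdx n p, ∑ β' : MIdx n' p', rnormSummand ρ A β.1 β'.1 :=
  sum_nonneg fun _ _ => sum_nonneg fun _ _ => by unfold rnormSummand; positivity

theorem oprod_apply (A : MMat n n' p p' F) (B : MMat n n' q q' F) (α : MIdx n (p + q))
    (α' : MIdx n' (p' + q')) :
    oprod A B α α' = ∑ β : MIdx n p, ∑ β' : MIdx n' p',
      if β.1 ≤ α.1 ∧ β'.1 ≤ α'.1 then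
        (mchoose α.1 β.1 : F) * A β β' * extendByZero B (α.1 - β.1) (α'.1 - β'.1)
      else 0 := by
  refine sum_congr rfl fun β _ => sum_congr rfl fun β' _ => ?_
  by_cases h : β.1 ≤ α.1 ∧ β'.1 ≤ α'.1
  · have h' : (∀ i, β.1 i ≤ α.1 i) ∧ (∀ j, β'.1 j ≤ α'.1 j) := h
    rw [dif_pos h', if_pos h, extendByZero, dif_pos ⟨mdeg_sub α β h.1, mdeg_sub α' β' h.2⟩,
      ← mchoose_mul_mfact_mul_mfact h.1]
    have : (mfact β.1 : F) ≠ 0 := Nat.cast_ne_zero.mpr (mfact_pos _).ne'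
    have : (mfact (α.1 - β.1) : F) ≠ 0 := Nat.cast_ne_zero.mpr (mfact_pos _).ne'
    push_cast
    field_simp
  · have h' : ¬((∀ i, β.1 i ≤ α.1 i) ∧ (∀ j, β'.1 j ≤ α'.1 j)) := h
    rw [dif_neg h', if_neg h]

theorem norm_oprod_apply_le (A : MMat n n' p p' F) (B : MMat n n' q q' F) (α : MIdx n (p + q))
    (α' : MIdx n' (p' + q')) :
    ‖oprod A B α α'‖ ≤ ∑ x : MIdx n p × MIdx n' p',
      (if x.1.1 ≤ α.1 ∧ x.2.1 ≤ α'.1 then (mchoose α.1 x.1.1 : ℝ) else 0) *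
        (‖A x.1 x.2‖ * ‖extendByZero B (α.1 - x.1.1) (α'.1 - x.2.1)‖) := by
  rw [oprod_apply, Fintype.sum_prod_type]
  refine (norm_sum_le _ _).trans (sum_le_sum fun β _ => (norm_sum_le _ _).trans
    (le_of_eq (sum_congr rfl fun β' _ => ?_)))
  split_ifs <;> simp [mul_assoc]

theorem sum_ite_mchoose_le (α : MIdx n (p + q)) (α' : MIdx n' (p' + q')) :
    ∑ x : MIdx n p × MIdx n' p',
      (if x.1.1 ≤ α.1 ∧ x.2.1 ≤ α'.1 then (mchoose α.1 x.1.1 : ℝ) else 0) ≤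
        (((p + q).choose p * (p' + q').choose p' : ℕ) : ℝ) := by
  calc _ ≤ ∑ x : MIdx n p × MIdx n' p', (mchoose α.1 x.1.1 * mchoose α'.1 x.2.1 : ℝ) := by
        refine sum_le_sum fun x _ => ?_
        split_ifs with h
        · have : (1 : ℝ) ≤ mchoose α'.1 x.2.1 := by exact_mod_cast mchoose_pos h.2
          nlinarith [(Nat.cast_nonneg (mchoose α.1 x.1.1) : (0 : ℝ) ≤ _)]
        · positivity
    _ = _ := by
        rw [Fintype.sum_prod_type]
        dsimp only
        rw [← sum_mul_sum]
        simp only [← Nat.cast_sum, sum_mchoose, α.2, α'.2, Nat.cast_mul]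

theorem cast_factorial_add_mul_rpow (s : ℝ) :
    (((p + q).factorial * (p' + q').factorial : ℕ) : ℝ) ^ s =
      (((p + q).choose p * (p' + q').choose p' : ℕ) : ℝ) ^ s *
        (((p.factorial * p'.factorial : ℕ) : ℝ) ^ s * ((q.factorial * q'.factorial : ℕ) : ℝ) ^ s) := by
  rw [← Real.mul_rpow (by positivity) (by positivity),
    ← Real.mul_rpow (by positivity) (by positivity)]
  congr 1
  norm_cast
  rw [← Nat.choose_mul_factorial_mul_factorial (Nat.le_add_right p q),
    ← Nat.choose_mul_factorial_mul_factorial (Nat.le_add_right p' q'), Nat.add_sub_cancel_left,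
    Nat.add_sub_cancel_left]
  ring

theorem rnormSummand_oprod_le {ρ : ℝ} (hρ : 1 ≤ ρ) (A : MMat n n' p p' F) (B : MMat n n' q q' F)
    (α : MIdx n (p + q)) (α' : MIdx n' (p' + q')) :
    rnormSummand ρ (oprod A B) α.1 α'.1 ≤ ∑ β : MIdx n p, ∑ β' : MIdx n' p',
      if β.1 ≤ α.1 ∧ β'.1 ≤ α'.1 then
        rnormSummand ρ A β.1 β'.1 * rnormSummand ρ B (α.1 - β.1) (α'.1 - β'.1)
      else 0 := by
  set K : ℝ := (((p + q).choose p * (p' + q').choose p' : ℕ) : ℝ)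
  have hpow := (Real.rpow_le_rpow (norm_nonneg _) (norm_oprod_apply_le A B α α')
    (zero_le_one.trans hρ)).trans
    (rpow_sum_mul_le_of_sum_le _ hρ (fun _ => by positivity) (fun _ => by positivity)
      (sum_ite_mchoose_le α α'))
  have hα : (0 : ℝ) < mfact α.1 := by exact_mod_cast mfact_pos α.1
  have hK : 0 < K := Nat.cast_pos.mpr
    (Nat.mul_pos (Nat.choose_pos (Nat.le_add_right _ _)) (Nat.choose_pos (Nat.le_add_right _ _)))
  rw [← Fintype.sum_prod_type', rnormSummand, extendByZero_val, cast_factorial_add_mul_rpow,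
    div_le_iff₀ (by positivity)]
  refine hpow.trans (le_of_eq ?_)
  rw [sum_mul, mul_sum]
  refine sum_congr rfl fun x _ => ?_
  split_ifs with h
  · have hβ : (0 : ℝ) < mfact x.1.1 := by exact_mod_cast mfact_pos _
    have hγ : (0 : ℝ) < mfact (α.1 - x.1.1) := by exact_mod_cast mfact_pos _
    rw [rnormSummand, rnormSummand, extendByZero_val, Real.mul_rpow (norm_nonneg _) (norm_nonneg _),
      ← mchoose_mul_mfact_mul_mfact h.1]
    push_cast
    field_simp
  · simp

theorem sum_sum_ite_le_sub {M : Type*} [NonUnitalNonAssocSemiring M]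
    (f : MIdx n p → MIdx n' p' → M) (g : (Fin n → ℕ) → (Fin n' → ℕ) → M) :
    ∑ α : MIdx n (p + q), ∑ α' : MIdx n' (p' + q'), ∑ β : MIdx n p, ∑ β' : MIdx n' p',
      (if β.1 ≤ α.1 ∧ β'.1 ≤ α'.1 then f β β' * g (α.1 - β.1) (α'.1 - β'.1) else 0) =
    ∑ β : MIdx n p, ∑ β' : MIdx n' p', f β β' * ∑ γ : MIdx n q, ∑ γ' : MIdx n' q', g γ.1 γ'.1 := by
  have inner (β : MIdx n p) (β' : MIdx n' p') :
      ∑ α : MIdx n (p + q), ∑ α' : MIdx n' (p' + q'),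
        (if β.1 ≤ α.1 ∧ β'.1 ≤ α'.1 then f β β' * g (α.1 - β.1) (α'.1 - β'.1) else 0) =
      f β β' * ∑ γ : MIdx n q, ∑ γ' : MIdx n' q', g γ.1 γ'.1 := by
    simp only [ite_and, sum_ite_irrel, sum_const_zero, mul_sum]
    rw [sum_ite_le_sub β fun γ => ∑ α' : MIdx n' (p' + q'),
      if β'.1 ≤ α'.1 then f β β' * g γ (α'.1 - β'.1) else 0]
    exact sum_congr rfl fun γ _ => sum_ite_le_sub β' fun γ' => f β β' * g γ.1 γ'
  conv_lhs => enter [2, α]; rw [sum_comm]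
  rw [sum_comm]
  conv_lhs => enter [2, β, 2, α]; rw [sum_comm]
  conv_lhs => enter [2, β]; rw [sum_comm]
  exact sum_congr rfl fun β _ => sum_congr rfl fun β' _ => inner β β'

theorem sum_rnormSummand_oprod_le {ρ : ℝ} (hρ : 1 ≤ ρ) (A : MMat n n' p p' F)
    (B : MMat n n' q q' F) :
    ∑ α : MIdx n (p + q), ∑ α' : MIdx n' (p' + q'), rnormSummand ρ (oprod A B) α.1 α'.1 ≤
      (∑ β : MIdx n p, ∑ β' : MIdx n' p', rnormSummand ρ A β.1 β'.1) *
        ∑ γ : MIdx n q, ∑ γ' : MIdx n' q', rnormSummand ρ B γ.1 γ'.1 :=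
  calc _ ≤ _ := sum_le_sum fun α _ => sum_le_sum fun α' _ => rnormSummand_oprod_le hρ A B α α'
    _ = _ := by rw [sum_sum_ite_le_sub]; simp only [sum_mul]

end MMat

theorem rnorm_oprod_le_general {n n' p p' q q' : ℕ} {F : Type*} [RCLike F]
    (ρ : ℝ) (hρ : 1 ≤ ρ) (A : MMat n n' p p' F) (B : MMat n n' q q' F) :
    rnorm ρ (oprod A B) ≤ rnorm ρ A * rnorm ρ B := by
  simp only [rnorm_eq_sum_rnormSummand]
  rw [← Real.mul_rpow (sum_rnormSummand_nonneg ρ A) (sum_rnormSummand_nonneg ρ B)]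
  exact Real.rpow_le_rpow (sum_rnormSummand_nonneg ρ _) (sum_rnormSummand_oprod_le hρ A B)
    (by positivity)

/-- For every real `ρ ≥ 1`, the `ρ`-norm is submultiplicative with respect to `⊙`:
`‖A⊙B‖_ρ ≤ ‖A‖_ρ·‖B‖_ρ`. -/
theorem rnorm_oprod_le {n n' p p' q q' : ℕ} {F : Type*} [RCLike F] (hn : 0 < n) (hn' : 0 < n')
    (ρ : ℝ) (hρ : 1 ≤ ρ) (A : MMat n n' p p' F) (B : MMat n n' q q' F) :
    rnorm ρ (oprod A B) ≤ rnorm ρ A * rnorm ρ B :=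
  rnorm_oprod_le_general ρ hρ A B

end
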